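/- arXiv:2205.12521 — 2 statements merged into one kernel-verified Lean document; each statement's English description precedes it below -/
import Mathlib

section
/- Let B be an N-function with right derivative b satisfying 1 < l := inf_{t>0} t·b(t)/B(t) ≤ sup_{t>0} t·b(t)/B(t) =: m < ∞, and let B̃ be its complement with right derivative B̃'. Then m/(m−1) = inf_{t>0} t·B̃'(t)/B̃(t) ≤ sup_{t>0} t·B̃'(t)/B̃(t) = l/(l−1). -/
/-!
Young's equality `B (b⁻¹ s) + B̃ s = s b⁻¹(s)`, a layer-cake computation, turns a bound
`c` on `t b(t) / B(t)` into the bound `c / (c - 1)` on `s b⁻¹(s) / B̃(s)` on the other side.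
Conversely, Young's equality at `s = b t`, which reads `B t + B̃ (b t) = t b(t)`, carries bounds on
`s b⁻¹(s) / B̃(s)` back to `t b(t) / B(t)`; since `c ↦ c / (c - 1)` is an involution reversing the
order on `(1, ∞)`, this gives sharpness.
-/

open Real Filter MeasureTheory Set Topology

/-- `binv` is the lower adjoint of `b` on `[0, ∞)`, that is, `binv y = min {x ≥ 0 | y ≤ b x}`. -/
structure IsNonnegLowerAdjoint (binv b : ℝ → ℝ) : Prop where
  nonneg (y : ℝ) : 0 ≤ binv y
  le_iff_le {x : ℝ} (hx : 0 ≤ x) (y : ℝ) : binv y ≤ x ↔ y ≤ b x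

theorem isNonnegLowerAdjoint_of_eq_sInf {b binv : ℝ → ℝ} (hb_mono : MonotoneOn b (Ici 0))
    (hb_rc : ∀ t ≥ (0:ℝ), ContinuousWithinAt b (Ici t) t) (hb_top : Tendsto b atTop atTop)
    (hbinv : ∀ s, binv s = sInf {u : ℝ | 0 ≤ u ∧ s ≤ b u}) :
    IsNonnegLowerAdjoint binv b := by
  have hne : ∀ y, {u : ℝ | 0 ≤ u ∧ y ≤ b u}.Nonempty := fun y =>
    let ⟨N, hN⟩ := eventually_atTop.1 (hb_top.eventually_ge_atTop y)
    ⟨max N 0, le_max_right _ _, hN _ (le_max_left _ _)⟩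
  have hbdd : ∀ y, BddBelow {u : ℝ | 0 ≤ u ∧ y ≤ b u} := fun y => ⟨0, fun _ hu => hu.1⟩
  have nonneg : ∀ y, 0 ≤ binv y := fun y => hbinv y ▸ le_csInf (hne y) fun _ hu => hu.1
  refine ⟨nonneg, fun {x} hx y => ⟨fun hyx => ?_, fun hyx => hbinv y ▸ csInf_le (hbdd y) ⟨hx, hyx⟩⟩⟩
  -- the infimum is attained, by right continuity of `b`
  have hmin : y ≤ b (binv y) := by
    refine ge_of_tendsto ((hb_rc _ (nonneg y)).tendsto.mono_left
      (nhdsWithin_mono _ Ioi_subset_Ici_self)) (eventually_nhdsWithin_of_forall fun v hv => ?_)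
    rw [mem_Ioi, hbinv, csInf_lt_iff (hbdd y) (hne y)] at hv
    obtain ⟨w, hw, hwv⟩ := hv
    exact hw.2.trans (hb_mono hw.1 (hw.1.trans hwv.le) hwv.le)
  exact hmin.trans (hb_mono (nonneg y) hx hyx)

theorem volume_real_Ici_inter_Ioo {a b c : ℝ} (ha : a ∈ Icc b c) :
    volume.real (Ici a ∩ Ioo b c) = c - a := by
  have hsub : Ici a ∩ Ioo b c ⊆ Icc a c := fun x hx => ⟨hx.1, hx.2.2.le⟩
  have hsup : Ioo a c ⊆ Ici a ∩ Ioo b c := fun x hx => ⟨hx.1.le, ha.1.trans_lt hx.1, hx.2⟩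
  have hfin : volume (Ici a ∩ Ioo b c) ≠ ⊤ := ((measure_mono hsub).trans_lt measure_Icc_lt_top).ne
  apply le_antisymm
  · simpa [ha.2] using measureReal_mono hsub (measure_Icc_lt_top (μ := volume)).ne
  · simpa [ha.2] using measureReal_mono hsup hfin

theorem integral_add_integral_eq_mul_of_le_iff {f g : ℝ → ℝ} {u s : ℝ} (hu : 0 ≤ u) (hs : 0 ≤ s)
    (hf : IntervalIntegrable f volume 0 u) (hg : IntervalIntegrable g volume 0 s)
    (hf_mem : ∀ x ∈ Ioo 0 u, f x ∈ Icc 0 s) (hg_mem : ∀ y ∈ Ioc 0 s, g y ∈ Icc 0 u)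
    (hfg : ∀ x ∈ Ioo 0 u, ∀ y ∈ Ioc 0 s, y ≤ f x ↔ g y ≤ x) :
    (∫ x in 0..u, f x) + ∫ y in 0..s, g y = u * s := by
  have hf' : Integrable f (volume.restrict (Ioo 0 u)) := hf.1.mono_set Ioo_subset_Ioc_self
  have layer_cake : ∫ x in 0..u, f x = ∫ y in Ioc 0 s, (u - g y) := by
    rw [intervalIntegral.integral_of_le hu, integral_Ioc_eq_integral_Ioo,
      hf'.integral_eq_integral_Ioc_meas_le
        (ae_restrict_of_forall_mem measurableSet_Ioo fun x hx => (hf_mem x hx).1)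
        (ae_restrict_of_forall_mem measurableSet_Ioo fun x hx => (hf_mem x hx).2)]
    refine setIntegral_congr_fun measurableSet_Ioc fun y hy => ?_
    have hlevel : {x | y ≤ f x} ∩ Ioo 0 u = Ici (g y) ∩ Ioo 0 u :=
      Set.ext fun x => and_congr_left fun hx => hfg x hx y hy
    rw [measureReal_restrict_apply' measurableSet_Ioo, hlevel,
      volume_real_Ici_inter_Ioo (hg_mem y hy)]
  have hu_int : IntegrableOn (fun _ => u) (Ioc 0 s) := integrableOn_const (by simp)
  rw [layer_cake, integral_sub hu_int hg.1, intervalIntegral.integral_of_le hs, setIntegral_const]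
  simp [hs, mul_comm]

def RatioBoundedAbove (f : ℝ → ℝ) (c : ℝ) : Prop :=
  ∀ t > 0, t * f t ≤ c * ∫ x in 0..t, f x

def RatioBoundedBelow (f : ℝ → ℝ) (c : ℝ) : Prop :=
  ∀ t > 0, c * ∫ x in 0..t, f x ≤ t * f t

namespace IsNonnegLowerAdjoint

variable {binv b : ℝ → ℝ}

theorem le_apply (h : IsNonnegLowerAdjoint binv b) (y : ℝ) : y ≤ b (binv y) :=
  (h.le_iff_le (h.nonneg y) y).1 le_rfl

theorem apply_lt_iff_lt (h : IsNonnegLowerAdjoint binv b) {x : ℝ} (hx : 0 ≤ x) (y : ℝ) :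
    b x < y ↔ x < binv y := by
  simpa only [not_le] using (h.le_iff_le hx y).not.symm

theorem apply_le (h : IsNonnegLowerAdjoint binv b) {x : ℝ} (hx : 0 ≤ x) : binv (b x) ≤ x :=
  (h.le_iff_le hx _).2 le_rfl

theorem monotone (h : IsNonnegLowerAdjoint binv b) : Monotone binv := fun _ y' hyy' =>
  (h.le_iff_le (h.nonneg y') _).2 (hyy'.trans (h.le_apply y'))

theorem monotoneOn (h : IsNonnegLowerAdjoint binv b) : MonotoneOn b (Ici 0) :=
  fun x hx _ hx' hxx' => (h.le_iff_le hx' (b x)).1 ((h.apply_le hx).trans hxx')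

theorem apply_nonneg (h : IsNonnegLowerAdjoint binv b) (hb0 : b 0 = 0) {x : ℝ} (hx : 0 ≤ x) :
    0 ≤ b x :=
  hb0 ▸ h.monotoneOn self_mem_Ici hx hx

theorem pos (h : IsNonnegLowerAdjoint binv b) (hb0 : b 0 = 0) {y : ℝ} (hy : 0 < y) : 0 < binv y :=
  (h.apply_lt_iff_lt le_rfl y).1 (by rwa [hb0])

theorem intervalIntegrable (h : IsNonnegLowerAdjoint binv b) {u : ℝ} (hu : 0 ≤ u) :
    IntervalIntegrable b volume 0 u :=
  (h.monotoneOn.mono fun _ hx => (uIcc_of_le hu ▸ hx).1).intervalIntegrable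

theorem integral_add_integral_eq_mul (h : IsNonnegLowerAdjoint binv b)
    (hb_nonneg : ∀ x > 0, 0 ≤ b x) {u s : ℝ} (hu : 0 ≤ u) (hs : 0 ≤ s)
    (hbs : ∀ x ∈ Ioo 0 u, b x ≤ s) (hsu : binv s ≤ u) :
    (∫ x in 0..u, b x) + ∫ y in 0..s, binv y = u * s :=
  integral_add_integral_eq_mul_of_le_iff hu hs (h.intervalIntegrable hu)
    h.monotone.intervalIntegrable (fun x hx => ⟨hb_nonneg x hx.1, hbs x hx⟩)
    (fun y hy => ⟨h.nonneg y, (h.monotone hy.2).trans hsu⟩)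
    fun _ hx y _ => (h.le_iff_le hx.1.le y).symm

theorem integral_add_integral_eq_binv_mul (h : IsNonnegLowerAdjoint binv b) (hb0 : b 0 = 0)
    {s : ℝ} (hs : 0 ≤ s) : (∫ x in 0..binv s, b x) + ∫ y in 0..s, binv y = binv s * s :=
  h.integral_add_integral_eq_mul (fun _ hx => h.apply_nonneg hb0 hx.le) (h.nonneg s) hs
    (fun _ hx => ((h.apply_lt_iff_lt hx.1.le s).2 hx.2).le) le_rfl

theorem integral_add_integral_eq_mul_apply (h : IsNonnegLowerAdjoint binv b)
    (hb_pos : ∀ t > 0, 0 < b t) {t : ℝ} (ht : 0 < t) :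
    (∫ x in 0..t, b x) + ∫ y in 0..b t, binv y = t * b t :=
  h.integral_add_integral_eq_mul (fun x hx => (hb_pos x hx).le) ht.le (hb_pos t ht).le
    (fun _ hx => h.monotoneOn hx.1.le ht.le hx.2.le) (h.apply_le ht.le)

theorem mul_integral_le_of_ratioBoundedBelow (h : IsNonnegLowerAdjoint binv b) (hb0 : b 0 = 0)
    {l : ℝ} (H : RatioBoundedBelow b l) {s : ℝ} (hs : 0 < s) :
    l * ∫ x in 0..binv s, b x ≤ binv s * s := by
  have hu : 0 < binv s := h.pos hb0 hs
  have hB : Tendsto (fun t => ∫ x in 0..t, b x) (𝓝[<] binv s) (𝓝 (∫ x in 0..binv s, b x)) := by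
    rw [← nhdsWithin_Ioo_eq_nhdsLT hu]
    exact (((intervalIntegral.continuousOn_primitive_interval' (h.intervalIntegrable hu.le)
      left_mem_uIcc) _ right_mem_uIcc).mono (Ioo_subset_Icc_self.trans Icc_subset_uIcc)).tendsto
  -- below `binv s` we have `b t < s`
  refine le_of_tendsto_of_tendsto (hB.const_mul l) (tendsto_nhdsWithin_of_tendsto_nhds
    ((continuous_id.mul continuous_const).tendsto' _ _ rfl))
    (eventually_of_mem (Ioo_mem_nhdsLT hu) fun t ht => (H t ht.1).trans ?_)
  exact mul_le_mul_of_nonneg_left ((h.apply_lt_iff_lt ht.1.le s).2 ht.2).le ht.1.le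

theorem mul_le_integral_of_ratioBoundedAbove (h : IsNonnegLowerAdjoint binv b) {c : ℝ}
    (H : RatioBoundedAbove binv c) {x : ℝ} (hx : 0 ≤ x) (hbx : 0 ≤ b x) :
    x * b x ≤ c * ∫ y in 0..b x, binv y := by
  have hBt : Tendsto (fun s => c * ∫ y in 0..s, binv y) (𝓝[>] b x)
      (𝓝 (c * ∫ y in 0..b x, binv y)) :=
    ((intervalIntegral.continuous_primitive (fun _ _ => h.monotone.intervalIntegrable)
      0).const_mul c).continuousWithinAt.tendsto
  -- above `b x` we have `x < binv s`
  refine le_of_tendsto_of_tendsto (tendsto_nhdsWithin_of_tendsto_nhds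
    ((continuous_const.mul continuous_id).tendsto' _ _ rfl)) hBt
    (eventually_nhdsWithin_of_forall fun s hs => ?_)
  have hs0 : 0 < s := hbx.trans_lt hs
  calc x * s ≤ s * binv s := by
        rw [mul_comm]; exact mul_le_mul_of_nonneg_left ((h.apply_lt_iff_lt hx s).1 hs).le hs0.le
    _ ≤ _ := H s hs0

theorem ratioBoundedBelow_inv_of_ratioBoundedAbove (h : IsNonnegLowerAdjoint binv b)
    (hb0 : b 0 = 0) {m : ℝ} (hm : 1 < m)
    (H : RatioBoundedAbove b m) : RatioBoundedBelow binv m.conjExponent := by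
  intro s hs
  have hu : 0 < binv s := h.pos hb0 hs
  have young := h.integral_add_integral_eq_binv_mul hb0 hs.le
  have hbu : binv s * s ≤ m * ∫ x in 0..binv s, b x :=
    (mul_le_mul_of_nonneg_left (h.le_apply s) hu.le).trans (H _ hu)
  rw [conjExponent, div_mul_eq_mul_div, div_le_iff₀ (by linarith)]
  nlinarith

theorem ratioBoundedAbove_inv_of_ratioBoundedBelow (h : IsNonnegLowerAdjoint binv b)
    (hb0 : b 0 = 0) {l : ℝ} (hl : 1 < l)
    (H : RatioBoundedBelow b l) : RatioBoundedAbove binv l.conjExponent := by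
  intro s hs
  have hu : 0 < binv s := h.pos hb0 hs
  have young := h.integral_add_integral_eq_binv_mul hb0 hs.le
  have hbu := h.mul_integral_le_of_ratioBoundedBelow hb0 H hs
  rw [conjExponent, div_mul_eq_mul_div, le_div_iff₀ (by linarith)]
  nlinarith

theorem ratioBoundedAbove_of_ratioBoundedBelow_inv (h : IsNonnegLowerAdjoint binv b)
    (hb_pos : ∀ t > 0, 0 < b t) {c : ℝ} (hc : 1 < c)
    (H : RatioBoundedBelow binv c) : RatioBoundedAbove b c.conjExponent := by
  intro t ht
  have young := h.integral_add_integral_eq_mul_apply hb_pos ht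
  have hbt : c * ∫ y in 0..b t, binv y ≤ t * b t :=
    (H _ (hb_pos t ht)).trans (by
      rw [mul_comm t]
      exact mul_le_mul_of_nonneg_left (h.apply_le ht.le) (hb_pos t ht).le)
  rw [conjExponent, div_mul_eq_mul_div, le_div_iff₀ (by linarith)]
  nlinarith

theorem ratioBoundedBelow_of_ratioBoundedAbove_inv (h : IsNonnegLowerAdjoint binv b)
    (hb_pos : ∀ t > 0, 0 < b t) {c : ℝ} (hc : 1 < c)
    (H : RatioBoundedAbove binv c) : RatioBoundedBelow b c.conjExponent := by
  intro t ht
  have young := h.integral_add_integral_eq_mul_apply hb_pos ht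
  have hbt := h.mul_le_integral_of_ratioBoundedAbove H ht.le (hb_pos t ht).le
  rw [conjExponent, div_mul_eq_mul_div, div_le_iff₀ (by linarith)]
  nlinarith

end IsNonnegLowerAdjoint

theorem Real.le_conjExponent_comm {a c : ℝ} (ha : 1 < a) (hc : 1 < c) :
    c ≤ a.conjExponent ↔ a ≤ c.conjExponent := by
  rw [conjExponent, conjExponent, le_div_iff₀ (sub_pos.2 ha), le_div_iff₀ (sub_pos.2 hc)]
  constructor <;> intro h <;> linarith

theorem Real.conjExponent_le_comm {a c : ℝ} (ha : 1 < a) (hc : 1 < c) :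
    a.conjExponent ≤ c ↔ c.conjExponent ≤ a := by
  rw [conjExponent, conjExponent, div_le_iff₀ (sub_pos.2 ha), div_le_iff₀ (sub_pos.2 hc)]
  constructor <;> intro h <;> linarith

section RatioSets

variable {f F : ℝ → ℝ} {c : ℝ}

theorem mem_lowerBounds_iff_ratioBoundedBelow (hF : ∀ t > 0, F t = ∫ x in 0..t, f x)
    (hF_pos : ∀ t > 0, 0 < F t) :
    c ∈ lowerBounds {r | ∃ t > 0, r = t * f t / F t} ↔ RatioBoundedBelow f c := by
  refine ⟨fun H t ht => ?_, fun H _ ⟨t, ht, hr⟩ => ?_⟩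
  · simpa only [← hF t ht, le_div_iff₀ (hF_pos t ht)] using H ⟨t, ht, rfl⟩
  · rw [hr, le_div_iff₀ (hF_pos t ht), hF t ht]
    exact H t ht

theorem mem_upperBounds_iff_ratioBoundedAbove (hF : ∀ t > 0, F t = ∫ x in 0..t, f x)
    (hF_pos : ∀ t > 0, 0 < F t) :
    c ∈ upperBounds {r | ∃ t > 0, r = t * f t / F t} ↔ RatioBoundedAbove f c := by
  refine ⟨fun H t ht => ?_, fun H _ ⟨t, ht, hr⟩ => ?_⟩
  · simpa only [← hF t ht, div_le_iff₀ (hF_pos t ht)] using H ⟨t, ht, rfl⟩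
  · rw [hr, div_le_iff₀ (hF_pos t ht), hF t ht]
    exact H t ht

end RatioSets

theorem stmt_3_general (b B binv Btilde : ℝ → ℝ) (l m : ℝ)
    (hb_mono : MonotoneOn b (Set.Ici 0))
    (hb_rc : ∀ t ≥ (0:ℝ), ContinuousWithinAt b (Set.Ici t) t)
    (hb0 : b 0 = 0)
    (hb_pos : ∀ t > (0:ℝ), 0 < b t)
    (hb_top : Tendsto b atTop atTop)
    (hB : ∀ t, B t = ∫ s in (0:ℝ)..|t|, b s)
    (hbinv : ∀ s, binv s = sInf {u : ℝ | 0 ≤ u ∧ s ≤ b u})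
    (hBt : ∀ t, Btilde t = ∫ s in (0:ℝ)..|t|, binv s)
    (hl : IsGLB {r : ℝ | ∃ t > (0:ℝ), r = t * b t / B t} l)
    (hm : IsLUB {r : ℝ | ∃ t > (0:ℝ), r = t * b t / B t} m)
    (h1l : 1 < l) (hlm : l ≤ m) :
    IsGLB {r : ℝ | ∃ t > (0:ℝ), r = t * binv t / Btilde t} (m / (m - 1)) ∧
    IsLUB {r : ℝ | ∃ t > (0:ℝ), r = t * binv t / Btilde t} (l / (l - 1)) := by
  have h := isNonnegLowerAdjoint_of_eq_sInf hb_mono hb_rc hb_top hbinv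
  have hm1 : 1 < m := h1l.trans_le hlm
  have hm1' : 1 < m.conjExponent := (HolderConjugate.conjExponent hm1).symm.lt
  have hB' : ∀ t > 0, B t = ∫ x in 0..t, b x := fun t ht => by rw [hB, abs_of_pos ht]
  have hBt' : ∀ t > 0, Btilde t = ∫ x in 0..t, binv x := fun t ht => by rw [hBt, abs_of_pos ht]
  have hB_pos : ∀ t > 0, 0 < B t := fun t ht => hB' t ht ▸
    intervalIntegral.intervalIntegral_pos_of_pos_on (h.intervalIntegrable ht.le)
      (fun x hx => hb_pos x hx.1) ht
  have hBt_pos : ∀ t > 0, 0 < Btilde t := fun t ht => hBt' t ht ▸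
    intervalIntegral.intervalIntegral_pos_of_pos_on h.monotone.intervalIntegrable
      (fun x hx => h.pos hb0 hx.1) ht
  have hb_below : RatioBoundedBelow b l :=
    (mem_lowerBounds_iff_ratioBoundedBelow hB' hB_pos).1 hl.1
  have hb_above : RatioBoundedAbove b m :=
    (mem_upperBounds_iff_ratioBoundedAbove hB' hB_pos).1 hm.1
  have hlower : m.conjExponent ∈ lowerBounds {r | ∃ t > 0, r = t * binv t / Btilde t} :=
    (mem_lowerBounds_iff_ratioBoundedBelow hBt' hBt_pos).2
      (h.ratioBoundedBelow_inv_of_ratioBoundedAbove hb0 hm1 hb_above)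
  have hupper : l.conjExponent ∈ upperBounds {r | ∃ t > 0, r = t * binv t / Btilde t} :=
    (mem_upperBounds_iff_ratioBoundedAbove hBt' hBt_pos).2
      (h.ratioBoundedAbove_inv_of_ratioBoundedBelow hb0 h1l hb_below)
  refine ⟨⟨hlower, fun c hc => ?_⟩, ⟨hupper, fun c hc => ?_⟩⟩
  · rcases le_or_gt c 1 with hc1 | hc1
    · exact hc1.trans hm1'.le
    · refine (le_conjExponent_comm hm1 hc1).2 (hm.2 ((mem_upperBounds_iff_ratioBoundedAbove hB'
        hB_pos).2 (h.ratioBoundedAbove_of_ratioBoundedBelow_inv hb_pos hc1 ?_)))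
      exact (mem_lowerBounds_iff_ratioBoundedBelow hBt' hBt_pos).1 hc
  · have hc1 : 1 < c := hm1'.trans_le ((hlower ⟨1, one_pos, rfl⟩).trans (hc ⟨1, one_pos, rfl⟩))
    refine (conjExponent_le_comm h1l hc1).2 (hl.2 ((mem_lowerBounds_iff_ratioBoundedBelow hB'
      hB_pos).2 (h.ratioBoundedBelow_of_ratioBoundedAbove_inv hb_pos hc1 ?_)))
    exact (mem_upperBounds_iff_ratioBoundedAbove hBt' hBt_pos).1 hc

theorem stmt_3 (b B binv Btilde : ℝ → ℝ) (l m : ℝ)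
    (hb_mono : MonotoneOn b (Set.Ici 0))
    (hb_rc : ∀ t ≥ (0:ℝ), ContinuousWithinAt b (Set.Ici t) t)
    (hb0 : b 0 = 0)
    (hb_pos : ∀ t > (0:ℝ), 0 < b t)
    (hb_top : Tendsto b atTop atTop)
    (hB : ∀ t, B t = ∫ s in (0:ℝ)..|t|, b s)
    (hbinv : ∀ s, binv s = sInf {u : ℝ | 0 ≤ u ∧ s ≤ b u})
    (hBt : ∀ t, Btilde t = ∫ s in (0:ℝ)..|t|, binv s)
    (hbinv_deriv : ∀ t ≥ (0:ℝ), ContinuousWithinAt binv (Set.Ici t) t)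
    (hl : IsGLB {r : ℝ | ∃ t > (0:ℝ), r = t * b t / B t} l)
    (hm : IsLUB {r : ℝ | ∃ t > (0:ℝ), r = t * b t / B t} m)
    (h1l : 1 < l) (hlm : l ≤ m) :
    IsGLB {r : ℝ | ∃ t > (0:ℝ), r = t * binv t / Btilde t} (m / (m - 1)) ∧
    IsLUB {r : ℝ | ∃ t > (0:ℝ), r = t * binv t / Btilde t} (l / (l - 1)) :=
  stmt_3_general b B binv Btilde l m hb_mono hb_rc hb0 hb_pos hb_top hB hbinv hBt hl hm h1l hlm
end

section
/- Let B be an N-function with 1 ≤ l = inf_{t>0} t b(t)/B(t) ≤ sup_{t>0} t b(t)/B(t) = m < ∞. Then for every u ∈ L^B(Ω), min{‖u‖_B^l, ‖u‖_B^m} ≤ ∫_Ω B(u) dx ≤ max{‖u‖_B^l, ‖u‖_B^m}. -/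
open Filter MeasureTheory

noncomputable def luxemburgNorm {Ω : Type*} [MeasurableSpace Ω] (μ : Measure Ω)
    (B : ℝ → ℝ) (u : Ω → ℝ) : ℝ :=
  sInf {lam : ℝ | 0 < lam ∧ ∫ x, B (u x / lam) ∂μ ≤ 1}

/-!
The bounds on `t b(t) / B(t)` say `l B ≤ t B' ≤ m B` on `(0, ∞)`, with `b` the right derivative
of `B`, so `t ↦ t ^ (-l) B(t)` increases and `t ↦ t ^ (-m) B(t)` decreases there. Hence
`min (c ^ l) (c ^ m) B(t) ≤ B(c t) ≤ max (c ^ l) (c ^ m) B(t)` for all `c > 0`. Applied to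
`u = λ (u / λ)` this traps `∫ B(u)` between `min (λ ^ l) (λ ^ m) ρ(λ)` and
`max (λ ^ l) (λ ^ m) ρ(λ)`, where `ρ(λ) = ∫ B(u / λ)`. Letting `λ` decrease to `‖u‖_B` through
`{ρ ≤ 1}` gives the upper bound; letting `λ` increase to `‖u‖_B` through `(0, ‖u‖_B)`, where
`ρ > 1`, gives the lower one.
-/

open Set Topology

theorem MonotoneOn.exists_monotone_eqOn_Ici {f : ℝ → ℝ} {a : ℝ} (hf : MonotoneOn f (Ici a)) :
    ∃ g : ℝ → ℝ, Monotone g ∧ EqOn g f (Ici a) :=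
  ⟨IciExtend fun x : Ici a => f x, (monotoneOn_iff_monotone.1 hf).IciExtend,
    fun _ hx => IciExtend_of_mem _ hx⟩

section Primitive

variable {b : ℝ → ℝ}

theorem integral_eq_of_eqOn_Ici {g : ℝ → ℝ} (hg : EqOn g b (Ici 0)) {t : ℝ} (ht : 0 ≤ t) :
    ∫ s in (0 : ℝ)..t, b s = ∫ s in (0 : ℝ)..t, g s :=
  intervalIntegral.integral_congr fun _ hs => (hg (uIcc_of_le ht ▸ hs).1).symm

theorem continuous_integral_abs (hb : MonotoneOn b (Ici 0)) :
    Continuous fun t => ∫ s in (0 : ℝ)..|t|, b s := by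
  obtain ⟨g, hg, hgb⟩ := hb.exists_monotone_eqOn_Ici
  simp_rw [integral_eq_of_eqOn_Ici hgb (abs_nonneg _)]
  exact (intervalIntegral.continuous_primitive (fun _ _ => hg.intervalIntegrable) 0).comp
    continuous_abs

theorem hasDerivWithinAt_integral_abs (hb : MonotoneOn b (Ici 0)) {x : ℝ} (hx : 0 ≤ x)
    (hbx : ContinuousWithinAt b (Ici x) x) :
    HasDerivWithinAt (fun t => ∫ s in (0 : ℝ)..|t|, b s) (b x) (Ici x) x := by
  obtain ⟨g, hg, hgb⟩ := hb.exists_monotone_eqOn_Ici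
  have hgx : ContinuousWithinAt g (Ioi x) x :=
    (hbx.congr (fun y hy => hgb (hx.trans hy)) (hgb hx)).mono Ioi_subset_Ici_self
  have := intervalIntegral.integral_hasDerivWithinAt_right (a := 0) (s := Ici x)
    hg.intervalIntegrable hg.measurable.aestronglyMeasurable.stronglyMeasurableAtFilter hgx
  rw [hgb hx] at this
  refine this.congr (fun y hy => ?_) ?_
  · rw [abs_of_nonneg (hx.trans hy), integral_eq_of_eqOn_Ici hgb (hx.trans hy)]
  · rw [abs_of_nonneg hx, integral_eq_of_eqOn_Ici hgb hx]

theorem integral_abs_nonneg (hb : MonotoneOn b (Ici 0)) (hb0 : b 0 = 0) (t : ℝ) :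
    0 ≤ ∫ s in (0 : ℝ)..|t|, b s :=
  intervalIntegral.integral_nonneg (abs_nonneg t) fun _ hs =>
    hb0 ▸ hb self_mem_Ici hs.1 hs.1

theorem integral_pos_of_monotoneOn (hb : MonotoneOn b (Ici 0)) (hb_pos : ∀ t > 0, 0 < b t) {t : ℝ}
    (ht : 0 < t) : 0 < ∫ s in (0 : ℝ)..t, b s :=
  intervalIntegral.intervalIntegral_pos_of_pos_on
    ((hb.mono fun _ hs => (uIcc_of_le ht.le ▸ hs).1).intervalIntegrable)
    (fun _ hs => hb_pos _ hs.1) ht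

end Primitive

section PowerGrowth

variable {f f' : ℝ → ℝ} {p : ℝ}

theorem monotoneOn_rpow_neg_mul (hf : ContinuousOn f (Ioi 0))
    (hf' : ∀ x > 0, HasDerivWithinAt f (f' x) (Ici x) x) (h : ∀ x > 0, p * f x ≤ x * f' x) :
    MonotoneOn (fun x => x ^ (-p) * f x) (Ioi 0) := by
  intro a ha c _ hac
  have hpos : ∀ x ∈ Icc a c, 0 < x := fun x hx => lt_of_lt_of_le ha hx.1
  have hderiv : ∀ x ∈ Ico a c, HasDerivWithinAt (fun x => x ^ (-p) * f x)
      (x ^ (-p - 1) * (x * f' x - p * f x)) (Ici x) x := by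
    intro x hx
    have hx0 := hpos x (Ico_subset_Icc_self hx)
    refine ((Real.hasDerivAt_rpow_const (p := -p) (Or.inl hx0.ne')).hasDerivWithinAt.mul
      (hf' x hx0)).congr_deriv ?_
    rw [Real.rpow_sub_one hx0.ne']
    field_simp
    ring
  have hcont : ContinuousOn (fun x => x ^ (-p) * f x) (Icc a c) :=
    (continuousOn_id.rpow_const fun x hx => Or.inl (hpos x hx).ne').mul
      (hf.mono fun x hx => hpos x hx)
  exact image_le_of_deriv_right_le_deriv_boundary (a := a) (b := c)
    (f := fun _ => a ^ (-p) * f a) (f' := 0)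
    continuousOn_const (fun x _ => hasDerivWithinAt_const x _ _) le_rfl hcont hderiv
    (fun x hx => mul_nonneg (Real.rpow_nonneg (hpos x (Ico_subset_Icc_self hx)).le _)
      (sub_nonneg.2 (h x (hpos x (Ico_subset_Icc_self hx)))))
    ⟨hac, le_rfl⟩

theorem rpow_mul_le_apply_mul (hf : ContinuousOn f (Ioi 0))
    (hf' : ∀ x > 0, HasDerivWithinAt f (f' x) (Ici x) x) (h : ∀ x > 0, p * f x ≤ x * f' x)
    {c t : ℝ} (hc : 1 ≤ c) (ht : 0 < t) : c ^ p * f t ≤ f (c * t) := by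
  have hc0 : 0 < c := one_pos.trans_le hc
  have hmono := monotoneOn_rpow_neg_mul hf hf' h ht (mul_pos hc0 ht)
    (le_mul_of_one_le_left ht.le hc)
  dsimp only at hmono
  rw [Real.mul_rpow hc0.le ht.le, Real.rpow_neg hc0.le, Real.rpow_neg ht.le] at hmono
  have htp : 0 < t ^ p := Real.rpow_pos_of_pos ht p
  have hcp : 0 < c ^ p := Real.rpow_pos_of_pos hc0 p
  rw [mul_comm (c ^ p)⁻¹, mul_assoc, mul_le_mul_iff_of_pos_left (inv_pos.2 htp)] at hmono
  rwa [← le_inv_mul_iff₀ hcp]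

theorem apply_mul_le_rpow_mul (hf : ContinuousOn f (Ioi 0))
    (hf' : ∀ x > 0, HasDerivWithinAt f (f' x) (Ici x) x) (h : ∀ x > 0, x * f' x ≤ p * f x)
    {c t : ℝ} (hc : 1 ≤ c) (ht : 0 < t) : f (c * t) ≤ c ^ p * f t := by
  have := rpow_mul_le_apply_mul (f := -f) (f' := -f') hf.neg (fun x hx => (hf' x hx).neg)
    (fun x hx => by simpa using h x hx) hc ht
  simpa using this

end PowerGrowth

def PowerScalingBounds (B : ℝ → ℝ) (l m : ℝ) : Prop :=
  ∀ c > (0 : ℝ), ∀ t, min (c ^ l) (c ^ m) * B t ≤ B (c * t) ∧ B (c * t) ≤ max (c ^ l) (c ^ m) * B t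

theorem powerScalingBounds_of_mul_deriv_bounds {B b : ℝ → ℝ} {l m : ℝ}
    (hB_abs : ∀ t, B |t| = B t) (hB0 : B 0 = 0) (hB_nonneg : ∀ t, 0 ≤ B t)
    (hBc : ContinuousOn B (Ioi 0)) (hB' : ∀ x > 0, HasDerivWithinAt B (b x) (Ici x) x)
    (hl : ∀ t > 0, l * B t ≤ t * b t) (hm : ∀ t > 0, t * b t ≤ m * B t) :
    PowerScalingBounds B l m := by
  intro c hc t
  suffices hpos : ∀ t > 0, min (c ^ l) (c ^ m) * B t ≤ B (c * t) ∧
      B (c * t) ≤ max (c ^ l) (c ^ m) * B t by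
    rcases lt_trichotomy t 0 with ht | rfl | ht
    · have := hpos |t| (abs_pos.2 ht.ne)
      rwa [← abs_of_pos hc, ← abs_mul, hB_abs, hB_abs, abs_of_pos hc] at this
    · simp [hB0]
    · exact hpos t ht
  intro t ht
  rw [min_mul_of_nonneg _ _ (hB_nonneg t), max_mul_of_nonneg _ _ (hB_nonneg t)]
  rcases le_total 1 c with hc1 | hc1
  · exact ⟨min_le_of_left_le (rpow_mul_le_apply_mul hBc hB' hl hc1 ht),
      le_max_of_le_right (apply_mul_le_rpow_mul hBc hB' hm hc1 ht)⟩
  · have hinv : 1 ≤ c⁻¹ := one_le_inv_iff₀.2 ⟨hc, hc1⟩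
    have hlow := rpow_mul_le_apply_mul hBc hB' hl hinv (mul_pos hc ht)
    have hup := apply_mul_le_rpow_mul hBc hB' hm hinv (mul_pos hc ht)
    rw [inv_mul_cancel_left₀ hc.ne', Real.inv_rpow hc.le] at hlow hup
    exact ⟨min_le_of_right_le ((le_inv_mul_iff₀ (Real.rpow_pos_of_pos hc m)).1 hup),
      le_max_of_le_left ((inv_mul_le_iff₀ (Real.rpow_pos_of_pos hc l)).1 hlow)⟩

theorem powerScalingBounds_of_isGLB_of_isLUB {b B : ℝ → ℝ} {l m : ℝ}
    (hb_mono : MonotoneOn b (Ici 0)) (hb_rc : ∀ t ≥ (0 : ℝ), ContinuousWithinAt b (Ici t) t)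
    (hb0 : b 0 = 0) (hb_pos : ∀ t > (0 : ℝ), 0 < b t) (hB : ∀ t, B t = ∫ s in (0 : ℝ)..|t|, b s)
    (hl : IsGLB {r : ℝ | ∃ t > (0 : ℝ), r = t * b t / B t} l)
    (hm : IsLUB {r : ℝ | ∃ t > (0 : ℝ), r = t * b t / B t} m) :
    PowerScalingBounds B l m := by
  obtain rfl : B = fun t => ∫ s in (0 : ℝ)..|t|, b s := funext hB
  have hB_pos : ∀ t > 0, 0 < ∫ s in (0 : ℝ)..|t|, b s := fun t ht => by
    simpa only [abs_of_pos ht] using integral_pos_of_monotoneOn hb_mono hb_pos ht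
  refine powerScalingBounds_of_mul_deriv_bounds (b := b) (by simp) (by simp)
    (integral_abs_nonneg hb_mono hb0) (continuous_integral_abs hb_mono).continuousOn
    (fun x hx => hasDerivWithinAt_integral_abs hb_mono hx.le (hb_rc x hx.le))
    (fun t ht => ?_) (fun t ht => ?_)
  · exact (le_div_iff₀ (hB_pos t ht)).1 (hl.1 ⟨t, ht, rfl⟩)
  · exact (div_le_iff₀ (hB_pos t ht)).1 (hm.1 ⟨t, ht, rfl⟩)

section Modular

variable {Ω : Type*} [MeasurableSpace Ω] {μ : Measure Ω} {B : ℝ → ℝ} {l m : ℝ} {u : Ω → ℝ}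
  (hB : PowerScalingBounds B l m) (hBm : Measurable B) (hB_nonneg : ∀ t, 0 ≤ B t)
  (hu : AEMeasurable u μ) (hBu : Integrable (fun x => B (u x)) μ)
include hB hBm hB_nonneg hu hBu

theorem integrable_comp_div {lam : ℝ} (hlam : 0 < lam) :
    Integrable (fun x => B (u x / lam)) μ := by
  refine (hBu.const_mul (max (lam⁻¹ ^ l) (lam⁻¹ ^ m))).mono'
    (hBm.comp_aemeasurable (hu.div_const lam)).aestronglyMeasurable (ae_of_all _ fun x => ?_)
  rw [Real.norm_of_nonneg (hB_nonneg _), div_eq_inv_mul]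
  exact (hB _ (inv_pos.2 hlam) _).2

theorem integral_mem_rpow_mul_integral_div {lam : ℝ} (hlam : 0 < lam) :
    min (lam ^ l) (lam ^ m) * ∫ x, B (u x / lam) ∂μ ≤ ∫ x, B (u x) ∂μ ∧
      ∫ x, B (u x) ∂μ ≤ max (lam ^ l) (lam ^ m) * ∫ x, B (u x / lam) ∂μ := by
  have hint := integrable_comp_div hB hBm hB_nonneg hu hBu hlam
  have hscale x := hB lam hlam (u x / lam)
  simp_rw [mul_div_cancel₀ _ hlam.ne'] at hscale
  rw [← integral_const_mul, ← integral_const_mul]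
  exact ⟨integral_mono (hint.const_mul _) hBu fun x => (hscale x).1,
    integral_mono hBu (hint.const_mul _) fun x => (hscale x).2⟩

theorem exists_integral_div_le_one (hl : 0 < l) (hm : 0 < m) :
    ∃ lam > 0, ∫ x, B (u x / lam) ∂μ ≤ 1 := by
  have hlim : Tendsto (fun c : ℝ => max (c ^ l) (c ^ m) * ∫ x, B (u x) ∂μ) (𝓝[>] 0) (𝓝 0) := by
    have hcont : Continuous fun c : ℝ => max (c ^ l) (c ^ m) * ∫ x, B (u x) ∂μ :=
      ((Real.continuous_rpow_const hl.le).max (Real.continuous_rpow_const hm.le)).mul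
        continuous_const
    simpa [Real.zero_rpow hl.ne', Real.zero_rpow hm.ne'] using
      (hcont.tendsto 0).mono_left nhdsWithin_le_nhds
  obtain ⟨c, hc1, hc⟩ := ((hlim.eventually (gt_mem_nhds one_pos)).and self_mem_nhdsWithin).exists
  refine ⟨c⁻¹, inv_pos.2 hc, ?_⟩
  calc ∫ x, B (u x / c⁻¹) ∂μ ≤ ∫ x, max (c ^ l) (c ^ m) * B (u x) ∂μ :=
        integral_mono (integrable_comp_div hB hBm hB_nonneg hu hBu (inv_pos.2 hc))
          (hBu.const_mul _) fun x => by
            simpa only [div_inv_eq_mul, mul_comm] using (hB c hc (u x)).2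
    _ = max (c ^ l) (c ^ m) * ∫ x, B (u x) ∂μ := integral_const_mul _ _
    _ ≤ 1 := hc1.le

theorem integral_le_max_luxemburgNorm_rpow (hl : 0 < l) (hm : 0 < m) :
    ∫ x, B (u x) ∂μ ≤ max (luxemburgNorm μ B u ^ l) (luxemburgNorm μ B u ^ m) := by
  obtain ⟨lam, -, hlam_lim, hlamS⟩ := exists_seq_tendsto_sInf
    (exists_integral_div_le_one hB hBm hB_nonneg hu hBu hl hm) ⟨0, fun _ h => h.1.le⟩
  have hcont : Continuous fun c : ℝ => max (c ^ l) (c ^ m) :=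
    (Real.continuous_rpow_const hl.le).max (Real.continuous_rpow_const hm.le)
  refine ge_of_tendsto ((hcont.tendsto _).comp hlam_lim) (Eventually.of_forall fun n => ?_)
  obtain ⟨hpos, hle⟩ := hlamS n
  calc ∫ x, B (u x) ∂μ ≤ max (lam n ^ l) (lam n ^ m) * ∫ x, B (u x / lam n) ∂μ :=
        (integral_mem_rpow_mul_integral_div hB hBm hB_nonneg hu hBu hpos).2
    _ ≤ max (lam n ^ l) (lam n ^ m) :=
        mul_le_of_le_one_right (le_max_of_le_left (Real.rpow_nonneg hpos.le _)) hle

theorem min_luxemburgNorm_rpow_le_integral (hl : 0 < l) (hm : 0 < m) :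
    min (luxemburgNorm μ B u ^ l) (luxemburgNorm μ B u ^ m) ≤ ∫ x, B (u x) ∂μ := by
  have hk : 0 ≤ luxemburgNorm μ B u := Real.sInf_nonneg fun _ h => h.1.le
  rcases hk.eq_or_lt with hk | hk
  · rw [← hk, Real.zero_rpow hl.ne', Real.zero_rpow hm.ne', min_self]
    exact integral_nonneg fun x => hB_nonneg _
  have hcont : Continuous fun c : ℝ => min (c ^ l) (c ^ m) :=
    (Real.continuous_rpow_const hl.le).min (Real.continuous_rpow_const hm.le)
  refine le_of_tendsto
    ((hcont.tendsto _).mono_left (nhdsWithin_le_nhds (s := Iio (luxemburgNorm μ B u)))) ?_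
  filter_upwards [Ioo_mem_nhdsLT hk] with lam ⟨hpos, hlt⟩
  have hgt : 1 < ∫ x, B (u x / lam) ∂μ := by
    by_contra! hle
    exact notMem_of_lt_csInf hlt ⟨0, fun _ h => h.1.le⟩ ⟨hpos, hle⟩
  calc min (lam ^ l) (lam ^ m) ≤ min (lam ^ l) (lam ^ m) * ∫ x, B (u x / lam) ∂μ :=
        le_mul_of_one_le_right (le_min (Real.rpow_nonneg hpos.le _) (Real.rpow_nonneg hpos.le _))
          hgt.le
    _ ≤ ∫ x, B (u x) ∂μ := (integral_mem_rpow_mul_integral_div hB hBm hB_nonneg hu hBu hpos).1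

end Modular

theorem stmt_16_general {Ω : Type*} [MeasurableSpace Ω] (μ : Measure Ω)
    (b B : ℝ → ℝ) (l m : ℝ)
    (hb_mono : MonotoneOn b (Set.Ici 0))
    (hb_rc : ∀ t ≥ (0:ℝ), ContinuousWithinAt b (Set.Ici t) t)
    (hb0 : b 0 = 0)
    (hb_pos : ∀ t > (0:ℝ), 0 < b t)
    (hB : ∀ t, B t = ∫ s in (0:ℝ)..|t|, b s)
    (hl : IsGLB {r : ℝ | ∃ t > (0:ℝ), r = t * b t / B t} l)
    (hm : IsLUB {r : ℝ | ∃ t > (0:ℝ), r = t * b t / B t} m)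
    (h1l : 1 ≤ l) (hlm : l ≤ m)
    (u : Ω → ℝ) (hu_meas : AEMeasurable u μ)
    (hu : Integrable (fun x => B (|u x|)) μ) :
    min (luxemburgNorm μ B u ^ l) (luxemburgNorm μ B u ^ m) ≤ ∫ x, B (u x) ∂μ ∧
    (∫ x, B (u x) ∂μ) ≤ max (luxemburgNorm μ B u ^ l) (luxemburgNorm μ B u ^ m) := by
  have hscale := powerScalingBounds_of_isGLB_of_isLUB hb_mono hb_rc hb0 hb_pos hB hl hm
  have hBm : Measurable B := (funext hB ▸ continuous_integral_abs hb_mono).measurable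
  have hB_nonneg : ∀ t, 0 ≤ B t := fun t => hB t ▸ integral_abs_nonneg hb_mono hb0 t
  have hBu : Integrable (fun x => B (u x)) μ := by simpa only [hB, abs_abs] using hu
  have hl0 : 0 < l := by linarith
  have hm0 : 0 < m := by linarith
  exact ⟨min_luxemburgNorm_rpow_le_integral hscale hBm hB_nonneg hu_meas hBu hl0 hm0,
    integral_le_max_luxemburgNorm_rpow hscale hBm hB_nonneg hu_meas hBu hl0 hm0⟩

theorem stmt_16 {Ω : Type*} [MeasurableSpace Ω] (μ : Measure Ω)
    (b B : ℝ → ℝ) (l m : ℝ)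
    (hb_mono : MonotoneOn b (Set.Ici 0))
    (hb_rc : ∀ t ≥ (0:ℝ), ContinuousWithinAt b (Set.Ici t) t)
    (hb0 : b 0 = 0)
    (hb_pos : ∀ t > (0:ℝ), 0 < b t)
    (hb_top : Tendsto b atTop atTop)
    (hB : ∀ t, B t = ∫ s in (0:ℝ)..|t|, b s)
    (hl : IsGLB {r : ℝ | ∃ t > (0:ℝ), r = t * b t / B t} l)
    (hm : IsLUB {r : ℝ | ∃ t > (0:ℝ), r = t * b t / B t} m)
    (h1l : 1 ≤ l) (hlm : l ≤ m)
    (u : Ω → ℝ) (hu_meas : AEMeasurable u μ)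
    (hu : Integrable (fun x => B (|u x|)) μ) :
    min (luxemburgNorm μ B u ^ l) (luxemburgNorm μ B u ^ m) ≤ ∫ x, B (u x) ∂μ ∧
    (∫ x, B (u x) ∂μ) ≤ max (luxemburgNorm μ B u ^ l) (luxemburgNorm μ B u ^ m) :=
  stmt_16_general μ b B l m hb_mono hb_rc hb0 hb_pos hB hl hm h1l hlm u hu_meas hu
end
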